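/- For every number of layers L and every choice of layer data as in the EIGN recursion, and for all direction-consistent orientations O, Ô and all inputs X_equ ∈ ℂ^{E×d_equ}, X_inv ∈ ℂ^{E×d_inv}, the equivariant output satisfies H^L_equ(Δ_{O,Ô} · X_equ, X_inv, Ô) = Δ_{O,Ô} · H^L_equ(X_equ, X_inv, O); that is, the equivariant output of EIGN is a jointly orientation-equivariant mapping. -/

import Mathlib

/-!
Reversing an undirected edge negates its column of `Bequ` and leaves everything else unchanged,
so `Bequ(Ô) = Bequ(O) Δ` with `Δ = Δ_{O,Ô}` a self-adjoint sign diagonal, `Δ² = 1`. By induction on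
the layer, the pair `(H_equ, H_inv)` computed for `(Δ X_equ, X_inv, Ô)` is `(Δ H_equ, H_inv)`: the
aggregates `Bequ(Ô) Δ H_equ = Bequ(O) H_equ` are unchanged, every term of `Z_equ` acquires a left
factor `Δ`, which passes through the odd `σ_equ` and through the Hadamard product, and is
erased by the entrywise absolute value in `H_inv`.
-/

open Matrix

/-- `O` assigns to each edge either its endpoint pair `(s e, t e)` or the reversed pair. -/
def IsOrientation {V E : Type*} (s t : E → V) (O : E → V × V) : Prop :=
  ∀ e, O e = (s e, t e) ∨ O e = (t e, s e)

/-- A direction-consistent orientation: an orientation which agrees with the direction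
`(s e, t e)` on every directed edge. -/
def DirConsistent {V E : Type*} (s t : E → V) (dir : E → Bool) (O : E → V × V) : Prop :=
  IsOrientation s t O ∧ ∀ e, dir e = true → O e = (s e, t e)

/-- The magnetic equivariant boundary operator. -/
noncomputable def Bequ {V E : Type*} [DecidableEq V] (q : ℝ) (s t : E → V) (dir : E → Bool)
    (O : E → V × V) : Matrix V E ℂ :=
  Matrix.of fun v e =>
    if dir e then
      if v = s e then -Complex.exp (Complex.I * (Real.pi * q : ℂ))
      else if v = t e then Complex.exp (-(Complex.I * (Real.pi * q : ℂ)))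
      else 0
    else
      if v = (O e).1 then -1
      else if v = (O e).2 then 1
      else 0

/-- The magnetic invariant boundary operator. -/
noncomputable def Binv {V E : Type*} [DecidableEq V] (q : ℝ) (s t : E → V) (dir : E → Bool) :
    Matrix V E ℂ :=
  Matrix.of fun v e =>
    if dir e then
      if v = s e then Complex.exp (Complex.I * (Real.pi * q : ℂ))
      else if v = t e then Complex.exp (-(Complex.I * (Real.pi * q : ℂ)))
      else 0
    else
      if v = s e ∨ v = t e then 1 else 0

/-- The orientation-change matrix `Δ_{O,Ô}`. -/
noncomputable def Delta {V E : Type*} [DecidableEq V] [DecidableEq E] (O Ohat : E → V × V) :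
    Matrix E E ℂ :=
  Matrix.diagonal fun e => if O e = Ohat e then 1 else -1

/-- The EIGN recursion: given boundary data `(q, s, t, dir)`, activations `σe, σi`,
per-layer feature dimensions `de, di` (with intermediate node-level dimensions
`ke, kie, ki, kei`), per-layer node feature transformations `hequ, hie, hinv, hei`,
per-layer weight matrices, an orientation `O`, and inputs `Xe, Xi`, this returns for each
layer `l` the pair `(H^l_equ, H^l_inv)` of equivariant and invariant representations. -/
noncomputable def EIGN {V E : Type} [Fintype V] [Fintype E] [DecidableEq V]
    (q : ℝ) (s t : E → V) (dir : E → Bool)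
    (σe σi : ℂ → ℂ)
    (de di ke kie ki kei : ℕ → ℕ)
    (hequ : ∀ l, Matrix V (Fin (de l)) ℂ → Matrix V (Fin (ke l)) ℂ)
    (hie : ∀ l, Matrix V (Fin (di l)) ℂ → Matrix V (Fin (kie l)) ℂ)
    (hinv : ∀ l, Matrix V (Fin (di l)) ℂ → Matrix V (Fin (ki l)) ℂ)
    (hei : ∀ l, Matrix V (Fin (de l)) ℂ → Matrix V (Fin (kei l)) ℂ)
    (Wee : ∀ l, Matrix (Fin (ke l)) (Fin (de (l + 1))) ℂ)
    (Wie : ∀ l, Matrix (Fin (kie l)) (Fin (de (l + 1))) ℂ)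
    (We : ∀ l, Matrix (Fin (de l)) (Fin (de (l + 1))) ℂ)
    (Wii : ∀ l, Matrix (Fin (ki l)) (Fin (di (l + 1))) ℂ)
    (Wei : ∀ l, Matrix (Fin (kei l)) (Fin (di (l + 1))) ℂ)
    (Wi : ∀ l, Matrix (Fin (di l)) (Fin (di (l + 1))) ℂ)
    (WFee : ∀ l, Matrix (Fin (de (l + 1))) (Fin (de (l + 1))) ℂ)
    (WFie : ∀ l, Matrix (Fin (di (l + 1))) (Fin (de (l + 1))) ℂ)
    (WFii : ∀ l, Matrix (Fin (di (l + 1))) (Fin (di (l + 1))) ℂ)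
    (WFei : ∀ l, Matrix (Fin (de (l + 1))) (Fin (di (l + 1))) ℂ)
    (O : E → V × V)
    (Xe : Matrix E (Fin (de 0)) ℂ) (Xi : Matrix E (Fin (di 0)) ℂ) :
    (l : ℕ) → Matrix E (Fin (de l)) ℂ × Matrix E (Fin (di l)) ℂ
  | 0 => (Xe, Xi)
  | l + 1 =>
      let H := EIGN q s t dir σe σi de di ke kie ki kei hequ hie hinv hei
        Wee Wie We Wii Wei Wi WFee WFie WFii WFei O Xe Xi l
      let Ze := ((Bequ q s t dir O)ᴴ * hequ l (Bequ q s t dir O * H.1) * Wee l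
                + (Bequ q s t dir O)ᴴ * hie l (Binv q s t dir * H.2) * Wie l
                + H.1 * We l).map σe
      let Zi := ((Binv q s t dir)ᴴ * hinv l (Binv q s t dir * H.2) * Wii l
                + (Binv q s t dir)ᴴ * hei l (Bequ q s t dir O * H.1) * Wei l
                + H.2 * Wi l).map σi
      (((Ze * WFee l).hadamard (Zi * WFie l) + Ze).map σe,
       ((Zi * WFii l).hadamard ((Ze * WFei l).map fun z => ((‖z‖ : ℝ) : ℂ)) + Zi).map σi)

section SignDiagonal

variable {E m α : Type*} [DecidableEq E]

theorem diagonal_mul_hadamard [Fintype E] [NonUnitalSemiring α] (d : E → α)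
    (A B : Matrix E m α) : (diagonal d * A) ⊙ B = diagonal d * (A ⊙ B) := by
  ext i j
  simp only [hadamard_apply, diagonal_mul, mul_assoc]

variable {d : E → ℂ}

theorem diagonal_mul_self_of_sign [Fintype E] (hd : ∀ e, d e = 1 ∨ d e = -1) :
    diagonal d * diagonal d = 1 := by
  rw [diagonal_mul_diagonal, ← diagonal_one]
  congr 1
  ext e
  rcases hd e with h | h <;> simp [h]

theorem conjTranspose_diagonal_of_sign (hd : ∀ e, d e = 1 ∨ d e = -1) :
    (diagonal d)ᴴ = diagonal d := by
  rw [diagonal_conjTranspose]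
  congr 1
  ext e
  rcases hd e with h | h <;> simp [h]

theorem map_diagonal_mul_of_odd [Fintype E] (hd : ∀ e, d e = 1 ∨ d e = -1) {σ : ℂ → ℂ}
    (hσ : ∀ x, σ (-x) = -σ x) (M : Matrix E m ℂ) :
    (diagonal d * M).map σ = diagonal d * M.map σ := by
  ext i j
  rcases hd i with h | h <;> simp [diagonal_mul, h, hσ]

theorem map_norm_diagonal_mul [Fintype E] (hd : ∀ e, ‖d e‖ = 1) (M : Matrix E m ℂ) :
    (diagonal d * M).map (fun z => ((‖z‖ : ℝ) : ℂ)) = M.map (fun z => ((‖z‖ : ℝ) : ℂ)) := by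
  ext i j
  simp [diagonal_mul, hd]

end SignDiagonal

theorem Delta_sign {V E : Type*} [DecidableEq V] (O Ohat : E → V × V) (e : E) :
    (if O e = Ohat e then 1 else -1 : ℂ) = 1 ∨ (if O e = Ohat e then 1 else -1 : ℂ) = -1 := by
  split_ifs <;> simp

theorem IsOrientation.eq_swap_of_ne {V E : Type*} {s t : E → V} {O Ohat : E → V × V}
    (hO : IsOrientation s t O) (hOhat : IsOrientation s t Ohat) {e : E} (h : O e ≠ Ohat e) :
    Ohat e = (O e).swap := by
  rcases hO e with h1 | h1 <;> rcases hOhat e with h2 | h2 <;> simp_all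

section Orientation

variable {V E : Type*} [DecidableEq V] [DecidableEq E] {s t : E → V}
  {dir : E → Bool} {O Ohat : E → V × V}

theorem conjTranspose_Delta : (Delta O Ohat)ᴴ = Delta O Ohat :=
  conjTranspose_diagonal_of_sign (Delta_sign O Ohat)

variable [Fintype E]

theorem Delta_mul_Delta : Delta O Ohat * Delta O Ohat = 1 :=
  diagonal_mul_self_of_sign (Delta_sign O Ohat)

theorem map_Delta_mul_of_odd {m : Type*} {σ : ℂ → ℂ} (hσ : ∀ x, σ (-x) = -σ x)
    (M : Matrix E m ℂ) : (Delta O Ohat * M).map σ = Delta O Ohat * M.map σ :=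
  map_diagonal_mul_of_odd (Delta_sign O Ohat) hσ M

theorem Delta_mul_hadamard {m : Type*} (A B : Matrix E m ℂ) :
    (Delta O Ohat * A) ⊙ B = Delta O Ohat * (A ⊙ B) :=
  diagonal_mul_hadamard _ A B

theorem map_norm_Delta_mul {m : Type*} (M : Matrix E m ℂ) :
    (Delta O Ohat * M).map (fun z => ((‖z‖ : ℝ) : ℂ)) = M.map (fun z => ((‖z‖ : ℝ) : ℂ)) :=
  map_norm_diagonal_mul (fun e => by rcases Delta_sign O Ohat e with h | h <;> simp [h]) M

theorem Bequ_mul_Delta (q : ℝ) (hO : DirConsistent s t dir O)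
    (hOhat : DirConsistent s t dir Ohat) :
    Bequ q s t dir O * Delta O Ohat = Bequ q s t dir Ohat := by
  ext v e
  rw [Delta, mul_diagonal]
  by_cases hdir : dir e
  · simp [Bequ, hdir, (hO.2 e hdir).trans (hOhat.2 e hdir).symm]
  by_cases h : O e = Ohat e
  · simp [Bequ, hdir, h]
  have hswap := hO.1.eq_swap_of_ne hOhat.1 h
  have hne : (O e).1 ≠ (O e).2 := fun heq => h (by rw [hswap]; exact Prod.ext heq heq.symm)
  rw [if_neg h]
  simp only [Bequ, of_apply, hdir, hswap, Prod.fst_swap, Prod.snd_swap]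
  split_ifs <;> simp_all

theorem conjTranspose_Bequ (q : ℝ) (hO : DirConsistent s t dir O)
    (hOhat : DirConsistent s t dir Ohat) :
    (Bequ q s t dir Ohat)ᴴ = Delta O Ohat * (Bequ q s t dir O)ᴴ := by
  rw [← Bequ_mul_Delta q hO hOhat, conjTranspose_mul, conjTranspose_Delta]

theorem Bequ_mul_Delta_mul (q : ℝ) (hO : DirConsistent s t dir O)
    (hOhat : DirConsistent s t dir Ohat) {m : Type*} (M : Matrix E m ℂ) :
    Bequ q s t dir Ohat * (Delta O Ohat * M) = Bequ q s t dir O * M := by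
  rw [← Bequ_mul_Delta q hO hOhat, Matrix.mul_assoc, ← Matrix.mul_assoc (Delta O Ohat),
    Delta_mul_Delta, Matrix.one_mul]

end Orientation

section Layers

variable {V E : Type} [Fintype V] [Fintype E] [DecidableEq V] [DecidableEq E]
  (q : ℝ) (s t : E → V) (dir : E → Bool) (σe σi : ℂ → ℂ) (de di ke kie ki kei : ℕ → ℕ)
  (hequ : ∀ l, Matrix V (Fin (de l)) ℂ → Matrix V (Fin (ke l)) ℂ)
  (hie : ∀ l, Matrix V (Fin (di l)) ℂ → Matrix V (Fin (kie l)) ℂ)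
  (hinv : ∀ l, Matrix V (Fin (di l)) ℂ → Matrix V (Fin (ki l)) ℂ)
  (hei : ∀ l, Matrix V (Fin (de l)) ℂ → Matrix V (Fin (kei l)) ℂ)
  (Wee : ∀ l, Matrix (Fin (ke l)) (Fin (de (l + 1))) ℂ)
  (Wie : ∀ l, Matrix (Fin (kie l)) (Fin (de (l + 1))) ℂ)
  (We : ∀ l, Matrix (Fin (de l)) (Fin (de (l + 1))) ℂ)
  (Wii : ∀ l, Matrix (Fin (ki l)) (Fin (di (l + 1))) ℂ)
  (Wei : ∀ l, Matrix (Fin (kei l)) (Fin (di (l + 1))) ℂ)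
  (Wi : ∀ l, Matrix (Fin (di l)) (Fin (di (l + 1))) ℂ)
  (WFee : ∀ l, Matrix (Fin (de (l + 1))) (Fin (de (l + 1))) ℂ)
  (WFie : ∀ l, Matrix (Fin (di (l + 1))) (Fin (de (l + 1))) ℂ)
  (WFii : ∀ l, Matrix (Fin (di (l + 1))) (Fin (di (l + 1))) ℂ)
  (WFei : ∀ l, Matrix (Fin (de (l + 1))) (Fin (di (l + 1))) ℂ)

local notation "eign" => EIGN q s t dir σe σi de di ke kie ki kei hequ hie hinv hei
  Wee Wie We Wii Wei Wi WFee WFie WFii WFei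

theorem EIGN_orientation_change {O Ohat : E → V × V} (hO : DirConsistent s t dir O)
    (hOhat : DirConsistent s t dir Ohat) (hσe : ∀ x, σe (-x) = -σe x)
    (Xe : Matrix E (Fin (de 0)) ℂ) (Xi : Matrix E (Fin (di 0)) ℂ) (L : ℕ) :
    (eign Ohat (Delta O Ohat * Xe) Xi L).1 = Delta O Ohat * (eign O Xe Xi L).1 ∧
      (eign Ohat (Delta O Ohat * Xe) Xi L).2 = (eign O Xe Xi L).2 := by
  induction L with
  | zero => exact ⟨rfl, rfl⟩
  | succ l ih =>
    obtain ⟨ihe, ihi⟩ := ih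
    simp only [EIGN, ihe, ihi, Bequ_mul_Delta_mul q hO hOhat,
      conjTranspose_Bequ q hO hOhat, Matrix.mul_assoc, ← Matrix.mul_add,
      map_Delta_mul_of_odd hσe, Delta_mul_hadamard, map_norm_Delta_mul, and_self]

end Layers

theorem eign_equ_output_jointly_orientation_equivariant_general
    {V E : Type} [Fintype V] [Fintype E] [DecidableEq V] [DecidableEq E]
    (q : ℝ) (s t : E → V) (dir : E → Bool)
    (σe σi : ℂ → ℂ) (hσe : ∀ x, σe (-x) = -σe x)
    (de di ke kie ki kei : ℕ → ℕ)
    (hequ : ∀ l, Matrix V (Fin (de l)) ℂ → Matrix V (Fin (ke l)) ℂ)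
    (hie : ∀ l, Matrix V (Fin (di l)) ℂ → Matrix V (Fin (kie l)) ℂ)
    (hinv : ∀ l, Matrix V (Fin (di l)) ℂ → Matrix V (Fin (ki l)) ℂ)
    (hei : ∀ l, Matrix V (Fin (de l)) ℂ → Matrix V (Fin (kei l)) ℂ)
    (Wee : ∀ l, Matrix (Fin (ke l)) (Fin (de (l + 1))) ℂ)
    (Wie : ∀ l, Matrix (Fin (kie l)) (Fin (de (l + 1))) ℂ)
    (We : ∀ l, Matrix (Fin (de l)) (Fin (de (l + 1))) ℂ)
    (Wii : ∀ l, Matrix (Fin (ki l)) (Fin (di (l + 1))) ℂ)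
    (Wei : ∀ l, Matrix (Fin (kei l)) (Fin (di (l + 1))) ℂ)
    (Wi : ∀ l, Matrix (Fin (di l)) (Fin (di (l + 1))) ℂ)
    (WFee : ∀ l, Matrix (Fin (de (l + 1))) (Fin (de (l + 1))) ℂ)
    (WFie : ∀ l, Matrix (Fin (di (l + 1))) (Fin (de (l + 1))) ℂ)
    (WFii : ∀ l, Matrix (Fin (di (l + 1))) (Fin (di (l + 1))) ℂ)
    (WFei : ∀ l, Matrix (Fin (de (l + 1))) (Fin (di (l + 1))) ℂ)
    (O Ohat : E → V × V)
    (hO : DirConsistent s t dir O) (hOhat : DirConsistent s t dir Ohat)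
    (Xe : Matrix E (Fin (de 0)) ℂ) (Xi : Matrix E (Fin (di 0)) ℂ) (L : ℕ) :
    (EIGN q s t dir σe σi de di ke kie ki kei hequ hie hinv hei
        Wee Wie We Wii Wei Wi WFee WFie WFii WFei Ohat (Delta O Ohat * Xe) Xi L).1
      = Delta O Ohat *
        (EIGN q s t dir σe σi de di ke kie ki kei hequ hie hinv hei
          Wee Wie We Wii Wei Wi WFee WFie WFii WFei O Xe Xi L).1 :=
  (EIGN_orientation_change q s t dir σe σi de di ke kie ki kei hequ hie hinv hei
    Wee Wie We Wii Wei Wi WFee WFie WFii WFei hO hOhat hσe Xe Xi L).1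

/-- The equivariant output of EIGN is a jointly orientation-equivariant mapping:
`H^L_equ(Δ_{O,Ô} X_equ, X_inv, Ô) = Δ_{O,Ô} H^L_equ(X_equ, X_inv, O)`. -/
theorem eign_equ_output_jointly_orientation_equivariant
    {V E : Type} [Fintype V] [Fintype E] [DecidableEq V] [DecidableEq E]
    (q : ℝ) (s t : E → V) (hst : ∀ e, s e ≠ t e) (dir : E → Bool)
    (σe σi : ℂ → ℂ) (hσe : ∀ x, σe (-x) = -σe x)
    (de di ke kie ki kei : ℕ → ℕ)
    (hequ : ∀ l, Matrix V (Fin (de l)) ℂ → Matrix V (Fin (ke l)) ℂ)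
    (hie : ∀ l, Matrix V (Fin (di l)) ℂ → Matrix V (Fin (kie l)) ℂ)
    (hinv : ∀ l, Matrix V (Fin (di l)) ℂ → Matrix V (Fin (ki l)) ℂ)
    (hei : ∀ l, Matrix V (Fin (de l)) ℂ → Matrix V (Fin (kei l)) ℂ)
    (Wee : ∀ l, Matrix (Fin (ke l)) (Fin (de (l + 1))) ℂ)
    (Wie : ∀ l, Matrix (Fin (kie l)) (Fin (de (l + 1))) ℂ)
    (We : ∀ l, Matrix (Fin (de l)) (Fin (de (l + 1))) ℂ)
    (Wii : ∀ l, Matrix (Fin (ki l)) (Fin (di (l + 1))) ℂ)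
    (Wei : ∀ l, Matrix (Fin (kei l)) (Fin (di (l + 1))) ℂ)
    (Wi : ∀ l, Matrix (Fin (di l)) (Fin (di (l + 1))) ℂ)
    (WFee : ∀ l, Matrix (Fin (de (l + 1))) (Fin (de (l + 1))) ℂ)
    (WFie : ∀ l, Matrix (Fin (di (l + 1))) (Fin (de (l + 1))) ℂ)
    (WFii : ∀ l, Matrix (Fin (di (l + 1))) (Fin (di (l + 1))) ℂ)
    (WFei : ∀ l, Matrix (Fin (de (l + 1))) (Fin (di (l + 1))) ℂ)
    (O Ohat : E → V × V)
    (hO : DirConsistent s t dir O) (hOhat : DirConsistent s t dir Ohat)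
    (Xe : Matrix E (Fin (de 0)) ℂ) (Xi : Matrix E (Fin (di 0)) ℂ) (L : ℕ) :
    (EIGN q s t dir σe σi de di ke kie ki kei hequ hie hinv hei
        Wee Wie We Wii Wei Wi WFee WFie WFii WFei Ohat (Delta O Ohat * Xe) Xi L).1
      = Delta O Ohat *
        (EIGN q s t dir σe σi de di ke kie ki kei hequ hie hinv hei
          Wee Wie We Wii Wei Wi WFee WFie WFii WFei O Xe Xi L).1 :=
  eign_equ_output_jointly_orientation_equivariant_general q s t dir σe σi hσe de di ke kie ki kei
    hequ hie hinv hei Wee Wie We Wii Wei Wi WFee WFie WFii WFei O Ohat hO hOhat Xe Xi L
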